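/- Let d ≥ 3 and let z_1, …, z_d ∈ ℤ^d be a basis of ℤ^d such that z̲_1, …, z̲_{d−1} are linearly independent and z̲_2, …, z̲_d are linearly independent in ℝ^{d−1}, |z̲_1| ≤ |z̲_2| ≤ |z̲_3|, and ⟨z̲_1, z̲_2⟩ ≤ 0. If d ≥ 4, assume moreover that det Λ̲_{1,n} > |z̲_2| · det Λ̲_{1,n−1} for n = 3, …, d−1. Let α ∈ 𝔖_1 ∩ int 𝔖_2 (where int 𝔖_2 = { x ∈ π_d : |x − α_2| < R_2 }) satisfy ⟨α, z_2⟩ · ⟨α_2, z_1⟩ ≥ 0. Then 1/(2 D_{2,d−1} B_1^{d−1}) ≤ |L_α(z_1)| · |z̲_1|^{d−1} ≤ 3/(2 D_{2,d−1} B_1^{d−1}). -/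

import Mathlib

open scoped InnerProductSpace

noncomputable section

/-- `ℝ^n` with the Euclidean structure. -/
abbrev E (n : ℕ) : Type := EuclideanSpace ℝ (Fin n)

/-- The projection `x ↦ x̲` forgetting the last coordinate. -/
def pr (d : ℕ) (x : E d) : E (d - 1) :=
  WithLp.toLp 2 (fun i : Fin (d - 1) => x (Fin.castLE (Nat.sub_le d 1) i))

/-- The canonical embedding of `ℤ^d` into `ℝ^d`. -/
def toE (d : ℕ) (z : Fin d → ℤ) : E d := WithLp.toLp 2 (fun i => (z i : ℝ))

/-- The `m`-dimensional volume of the parallelepiped spanned by `v 0, …, v (m-1)`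
(square root of the Gram determinant). -/
def gramVol {n m : ℕ} (v : Fin m → E n) : ℝ :=
  Real.sqrt ((Matrix.of (fun i j : Fin m => ⟪v i, v j⟫_ℝ)).det)

/-- `z` is a best approximation vector for the linear form `L_α : x ↦ ⟪α, x⟫`. -/
def IsBestApprox (d : ℕ) (α : E d) (z : Fin d → ℤ) : Prop :=
  pr d (toE d z) ≠ 0 ∧
  ∀ z' : Fin d → ℤ, pr d (toE d z') ≠ 0 →
    (‖pr d (toE d z')‖ ≤ ‖pr d (toE d z)‖ → |⟪α, toE d z⟫_ℝ| ≤ |⟪α, toE d z'⟫_ℝ|) ∧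
    (‖pr d (toE d z')‖ < ‖pr d (toE d z)‖ → |⟪α, toE d z⟫_ℝ| < |⟪α, toE d z'⟫_ℝ|)

/-- `det Λ̲_{k,l}` for a sequence of integer vectors: the `l`-dimensional volume of the
parallelepiped spanned by `z̲_k, …, z̲_{k+l-1}`. -/
def detL (d : ℕ) (z : ℕ → Fin d → ℤ) (k l : ℕ) : ℝ :=
  gramVol (fun i : Fin l => pr d (toE d (z (k + i.1))))

/-- `D_{k,l} = det Λ̲_{k,l} / |z̲_k|^l`. -/
def Dq (d : ℕ) (z : ℕ → Fin d → ℤ) (k l : ℕ) : ℝ :=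
  detL d z k l / ‖pr d (toE d (z k))‖ ^ l

/-- `B_k = |z̲_{k+1}| / |z̲_k|`. -/
def Bq (d : ℕ) (z : ℕ → Fin d → ℤ) (k : ℕ) : ℝ :=
  ‖pr d (toE d (z (k + 1)))‖ / ‖pr d (toE d (z k))‖

/-- `R_k = 1 / (2 |z̲_{k+1}| det Λ̲_{k,d-1})`. -/
def Rq (d : ℕ) (z : ℕ → Fin d → ℤ) (k : ℕ) : ℝ :=
  1 / (2 * ‖pr d (toE d (z (k + 1)))‖ * detL d z k (d - 1))

/-- `v 0, …, v (d-1)` form a basis of the lattice `ℤ^d`. -/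
def IsZBasis (d : ℕ) (v : Fin d → Fin d → ℤ) : Prop :=
  IsUnit ((Matrix.of (fun i j : Fin d => v j i)).det)

/-!
As `z_1, …, z_d` is a basis of `ℤ^d`, `det (z_1, …, z_d) = ±1`. Replacing the last row of this
matrix by `α_2ᵀ (z_1, …, z_d) = (L_{α_2}(z_1), 0, …, 0)` and expanding along it gives
`|L_{α_2}(z_1)| · det Λ̲_{2,d-1} = 1`. Since `α` and `α_2` both lie in `π_d`,
`L_α(z_1) - L_{α_2}(z_1) = ⟨α̲ - α̲_2, z̲_1⟩`, of absolute value at most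
`R_2 |z̲_1| ≤ 1 / (2 det Λ̲_{2,d-1})` because `|z̲_1| ≤ |z̲_3|`. So `|L_α(z_1)|` lies between `1/2` and
`3/2` times `1 / det Λ̲_{2,d-1}`, and `D_{2,d-1} B_1^{d-1} = det Λ̲_{2,d-1} / |z̲_1|^{d-1}`.
-/

open Matrix

lemma gramVol_eq_abs_det {n : ℕ} (v : Fin n → E n) :
    gramVol v = |(Matrix.of fun i j : Fin n => v j i).det| := by
  set A : Matrix (Fin n) (Fin n) ℝ := Matrix.of fun i j => v j i
  have hgram : Matrix.of (fun i j : Fin n => ⟪v i, v j⟫_ℝ) = Aᵀ * A := by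
    ext i j
    simp only [of_apply, mul_apply, transpose_apply, A, PiLp.inner_apply, RCLike.inner_apply,
      conj_trivial]
    exact Finset.sum_congr rfl fun _ _ => mul_comm _ _
  rw [gramVol, hgram, det_mul, det_transpose, ← sq, Real.sqrt_sq_eq_abs]

section LastCoordinate

variable {k : ℕ}

lemma norm_pr_le (x : E (k + 1)) : ‖pr (k + 1) x‖ ≤ ‖x‖ := by
  rw [EuclideanSpace.norm_eq, EuclideanSpace.norm_eq, Fin.sum_univ_castSucc]
  exact Real.sqrt_le_sqrt (le_add_of_nonneg_right (sq_nonneg _))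

lemma inner_eq_inner_pr_of_last_eq_zero {x : E (k + 1)} (hx : x (Fin.last k) = 0) (y : E (k + 1)) :
    ⟪x, y⟫_ℝ = ⟪pr (k + 1) x, pr (k + 1) y⟫_ℝ := by
  simp only [PiLp.inner_apply, RCLike.inner_apply, conj_trivial]
  rw [Fin.sum_univ_castSucc, hx, mul_zero, add_zero]
  rfl

lemma abs_inner_le_norm_mul_norm_pr {x : E (k + 1)} (hx : x (Fin.last k) = 0) (y : E (k + 1)) :
    |⟪x, y⟫_ℝ| ≤ ‖x‖ * ‖pr (k + 1) y‖ := by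
  rw [inner_eq_inner_pr_of_last_eq_zero hx]
  exact (abs_real_inner_le_norm _ _).trans
    (mul_le_mul_of_nonneg_right (norm_pr_le x) (norm_nonneg _))

lemma abs_inner_mul_gramVol_eq_abs_det (v : Fin (k + 1) → E (k + 1)) {α : E (k + 1)}
    (hα : α (Fin.last k) = 1) (hperp : ∀ j : Fin k, ⟪α, v j.succ⟫_ℝ = 0) :
    |⟪α, v 0⟫_ℝ| * gramVol (fun j : Fin k => pr (k + 1) (v j.succ)) =
      |(Matrix.of fun i j : Fin (k + 1) => v j i).det| := by
  set A : Matrix (Fin (k + 1)) (Fin (k + 1)) ℝ := Matrix.of fun i j => v j i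
  have hrow : ∀ j, (∑ i, α i • A i) j = ⟪α, v j⟫_ℝ := fun j => by
    simp [A, Finset.sum_apply, PiLp.inner_apply, mul_comm]
  -- as `α (Fin.last k) = 1`, replacing the last row of `A` by `∑ i, α i • A i` keeps the
  -- determinant, and makes that row `(⟪α, v 0⟫, 0, …, 0)`
  have hdet := det_updateRow_sum A (Fin.last k) (fun i => α i)
  rw [hα, one_smul, det_succ_row _ (Fin.last k), Finset.sum_eq_single 0] at hdet
  · have hminor : (A.updateRow (Fin.last k) (∑ i, α i • A i)).submatrix (Fin.last k).succAbove
        (0 : Fin (k + 1)).succAbove = Matrix.of fun i j : Fin k => pr (k + 1) (v j.succ) i := by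
      ext i j
      simp only [Fin.succAbove_last, Fin.succAbove_zero, submatrix_apply, ne_eq,
        Fin.castSucc_ne_last, not_false_eq_true, updateRow_ne, of_apply, pr, A]
      rfl
    rw [gramVol_eq_abs_det, ← hdet, updateRow_self, hrow, hminor, abs_mul, abs_mul, abs_pow,
      abs_neg, abs_one, one_pow, one_mul]
    rfl
  · intro j _ hj
    obtain ⟨j, rfl⟩ := Fin.exists_succ_eq.mpr hj
    rw [updateRow_self, hrow, hperp, mul_zero, zero_mul]
  · simp

end LastCoordinate

lemma abs_det_eq_one_of_isZBasis {d : ℕ} {v : Fin d → Fin d → ℤ} (hv : IsZBasis d v) :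
    |(Matrix.of fun i j : Fin d => (v j i : ℝ)).det| = 1 := by
  have hcast : (Matrix.of fun i j : Fin d => (v j i : ℝ)) =
      (Int.castRingHom ℝ).mapMatrix (Matrix.of fun i j : Fin d => v j i) := by
    ext i j
    simp
  rw [hcast, ← RingHom.map_det, eq_intCast, ← Int.cast_abs, Int.isUnit_iff_abs_eq.mp hv,
    Int.cast_one]

lemma Dq_mul_Bq_pow (d : ℕ) (z : ℕ → Fin d → ℤ) (k l : ℕ)
    (hz : ‖pr d (toE d (z (k + 1)))‖ ≠ 0) :
    Dq d z (k + 1) l * Bq d z k ^ l = detL d z (k + 1) l / ‖pr d (toE d (z k))‖ ^ l := by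
  rw [Dq, Bq, div_pow, div_mul_div_comm, mul_comm (_ ^ l), mul_div_mul_right _ _ (pow_ne_zero _ hz)]

lemma abs_inner_mul_detL_eq_one {k : ℕ} {z : ℕ → Fin (k + 1) → ℤ}
    (hbasis : IsZBasis (k + 1) fun j => z (j.1 + 1)) {α : E (k + 1)} (hα : α (Fin.last k) = 1)
    (hperp : ∀ i : Fin k, ⟪α, toE (k + 1) (z (i.1 + 2))⟫_ℝ = 0) :
    |⟪α, toE (k + 1) (z 1)⟫_ℝ| * detL (k + 1) z 2 k = 1 := calc
  _ = |⟪α, toE (k + 1) (z 1)⟫_ℝ| *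
      gramVol fun j : Fin k => pr (k + 1) (toE (k + 1) (z (j.succ.1 + 1))) := by
    simp only [detL, Fin.val_succ, add_comm _ 1, ← add_assoc, one_add_one_eq_two]
  _ = 1 := (abs_inner_mul_gramVol_eq_abs_det (fun j => toE (k + 1) (z (j.1 + 1))) hα hperp).trans
      (abs_det_eq_one_of_isZBasis hbasis)

lemma abs_inner_sub_inner_le_of_norm_sub_le_Rq {k : ℕ} {z : ℕ → Fin (k + 1) → ℤ}
    (h13 : ‖pr (k + 1) (toE (k + 1) (z 1))‖ ≤ ‖pr (k + 1) (toE (k + 1) (z 3))‖)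
    {α β : E (k + 1)} (hlast : α (Fin.last k) = β (Fin.last k)) (hR : ‖α - β‖ ≤ Rq (k + 1) z 2) :
    |⟪α, toE (k + 1) (z 1)⟫_ℝ - ⟪β, toE (k + 1) (z 1)⟫_ℝ| ≤ 1 / (2 * detL (k + 1) z 2 k) := by
  set n1 := ‖pr (k + 1) (toE (k + 1) (z 1))‖
  set n3 := ‖pr (k + 1) (toE (k + 1) (z 3))‖
  have hL : 0 ≤ detL (k + 1) z 2 k := Real.sqrt_nonneg _
  calc _ = |⟪α - β, toE (k + 1) (z 1)⟫_ℝ| := by rw [inner_sub_left]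
    _ ≤ ‖α - β‖ * n1 := abs_inner_le_norm_mul_norm_pr (sub_eq_zero.mpr hlast) _
    _ ≤ 1 / (2 * n3 * detL (k + 1) z 2 k) * n1 := by gcongr; exact hR
    _ = n1 / n3 * (1 / (2 * detL (k + 1) z 2 k)) := by ring
    _ ≤ 1 / (2 * detL (k + 1) z 2 k) :=
      mul_le_of_le_one_left (by positivity) (div_le_one_of_le₀ h13 (norm_nonneg _))

lemma abs_bounds_of_abs_sub_le_half {x t : ℝ} (h : |x - t| ≤ |t| / 2) :
    |t| / 2 ≤ |x| ∧ |x| ≤ 3 * (|t| / 2) := by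
  have := abs_sub_abs_le_abs_sub x t
  have := abs_sub_abs_le_abs_sub t x
  rw [abs_sub_comm] at this
  constructor <;> linarith

theorem stmt12 (d : ℕ) (hd : 3 ≤ d) (z : ℕ → Fin d → ℤ)
    (hbasis : IsZBasis d (fun j => z (j.1 + 1)))
    (hlip1 : LinearIndependent ℝ (fun i : Fin (d - 1) => pr d (toE d (z (i.1 + 1)))))
    (h12 : ‖pr d (toE d (z 1))‖ ≤ ‖pr d (toE d (z 2))‖)
    (h23 : ‖pr d (toE d (z 2))‖ ≤ ‖pr d (toE d (z 3))‖)
    (α2 : E d) (hα2pi : α2 ⟨d - 1, by omega⟩ = 1)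
    (hα2perp : ∀ i : Fin (d - 1), ⟪α2, toE d (z (i.1 + 2))⟫_ℝ = 0)
    (α : E d) (hαpi : α ⟨d - 1, by omega⟩ = 1)
    (hαS2 : ‖α - α2‖ < Rq d z 2) :
    1 / (2 * Dq d z 2 (d - 1) * Bq d z 1 ^ (d - 1)) ≤
        |⟪α, toE d (z 1)⟫_ℝ| * ‖pr d (toE d (z 1))‖ ^ (d - 1) ∧
      |⟪α, toE d (z 1)⟫_ℝ| * ‖pr d (toE d (z 1))‖ ^ (d - 1) ≤
        3 / (2 * Dq d z 2 (d - 1) * Bq d z 1 ^ (d - 1)) := by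
  obtain ⟨k, rfl⟩ : ∃ k, d = k + 1 := ⟨d - 1, by omega⟩
  set n1 := ‖pr (k + 1) (toE (k + 1) (z 1))‖
  set L := detL (k + 1) z 2 k
  set t := ⟪α2, toE (k + 1) (z 1)⟫_ℝ
  have hn1 : 0 < n1 := norm_pos_iff.mpr (by simpa using hlip1.ne_zero ⟨0, by omega⟩)
  have hkey : |t| * L = 1 := abs_inner_mul_detL_eq_one hbasis hα2pi hα2perp
  have hL : 0 < L := lt_of_le_of_ne (Real.sqrt_nonneg _) fun h => by simp [← h] at hkey
  have ht : |t| = 1 / L := eq_div_of_mul_eq hL.ne' hkey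
  have hclose : |⟪α, toE (k + 1) (z 1)⟫_ℝ - t| ≤ |t| / 2 := by
    rw [ht, div_div, mul_comm L]
    exact abs_inner_sub_inner_le_of_norm_sub_le_Rq (h12.trans h23) (hαpi.trans hα2pi.symm)
      hαS2.le
  obtain ⟨hlo, hhi⟩ := abs_bounds_of_abs_sub_le_half hclose
  simp only [Nat.add_sub_cancel]
  rw [mul_assoc, Dq_mul_Bq_pow _ _ 1 k (hn1.trans_le h12).ne']
  have hscale (c : ℝ) : c / (2 * (L / n1 ^ k)) = c * (|t| / 2) * n1 ^ k := by
    rw [ht]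
    field_simp
  rw [hscale, hscale, one_mul]
  exact ⟨by gcongr, by gcongr⟩
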